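/- arXiv:2007.04362 — 5 statements merged into one kernel-verified Lean document; each statement's English description precedes it below -/
import Mathlib

section
/- Let f be a weakly monotone allocation function on n machines and m jobs. Fix a machine i and two cost matrices T, T' that agree on all machines except i. Let x = f(T) and x' = f(T'). Suppose the jobs split into three sets: F1 = jobs j with x_i^j = 1 and t_i^j > t'_i^j, F2 = jobs k with x_i^k = 0 and t_i^k < t'_i^k, and F3 = all remaining jobs, where t_i^q = t'_i^q for all q in F3. Then for every job r in F1 ∪ F2, x'_i^r = x_i^r. -/
/-- weak monotonicity implies the allocation of machine `i` is unchanged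
on the jobs in `F1 ∪ F2`. -/
theorem stmt_0 (n m : ℕ)
    (f : Matrix (Fin n) (Fin m) ℝ → Matrix (Fin n) (Fin m) ℝ)
    (halloc : ∀ T i j, f T i j = 0 ∨ f T i j = 1)
    (hone : ∀ T j, ∑ i, f T i j = 1)
    (hwmon : ∀ (i : Fin n) (T T' : Matrix (Fin n) (Fin m) ℝ),
      (∀ i' ≠ i, T i' = T' i') →
      ∑ j, (T i j - T' i j) * (f T i j - f T' i j) ≤ 0)
    (i : Fin n) (T T' : Matrix (Fin n) (Fin m) ℝ)
    (hrows : ∀ i' ≠ i, T i' = T' i')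
    (F1 F2 : Finset (Fin m))
    (hdisj : Disjoint F1 F2)
    (hF1 : ∀ j ∈ F1, f T i j = 1 ∧ T' i j < T i j)
    (hF2 : ∀ k ∈ F2, f T i k = 0 ∧ T i k < T' i k)
    (hF3 : ∀ q, q ∉ F1 → q ∉ F2 → T i q = T' i q) :
    ∀ r ∈ F1 ∪ F2, f T' i r = f T i r := by
  have hnn : ∀ j ∈ Finset.univ, (0:ℝ) ≤ (T i j - T' i j) * (f T i j - f T' i j) := by
    intro j _
    by_cases h1 : j ∈ F1
    · obtain ⟨hx, ht⟩ := hF1 j h1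
      have : f T' i j ≤ 1 := by rcases halloc T' i j with h | h <;> simp [h]
      have h2 : 0 ≤ f T i j - f T' i j := by rw [hx]; linarith
      exact mul_nonneg (by linarith) h2
    · by_cases h2 : j ∈ F2
      · obtain ⟨hx, ht⟩ := hF2 j h2
        have : 0 ≤ f T' i j := by rcases halloc T' i j with h | h <;> simp [h]
        have h3 : f T i j - f T' i j ≤ 0 := by rw [hx]; linarith
        nlinarith [h3]
      · rw [hF3 j h1 h2]; simp
  have hsum : ∑ j, (T i j - T' i j) * (f T i j - f T' i j) = 0 :=
    le_antisymm (hwmon i T T' hrows) (Finset.sum_nonneg hnn)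
  have hzero := (Finset.sum_eq_zero_iff_of_nonneg hnn).mp hsum
  intro r hr
  have h0 := hzero r (Finset.mem_univ r)
  rcases Finset.mem_union.mp hr with h1 | h2
  · obtain ⟨hx, ht⟩ := hF1 r h1
    rcases mul_eq_zero.mp h0 with h | h
    · linarith
    · linarith
  · obtain ⟨hx, ht⟩ := hF2 r h2
    rcases mul_eq_zero.mp h0 with h | h
    · linarith
    · linarith
end

section
/- Let f be a weakly monotone allocation function, i a machine, and T, T' two cost matrices differing only in row i, with x = f(T), x' = f(T'). Suppose j is a job with x_i^j = 1 and t_i^j > t'_i^j, k is a job with t_i^k > t'_i^k, and for every other job l, t_i^l = t'_i^l. Then x'_i^j = 1 or x'_i^k = 1. Moreover, if additionally t_i^k − t'_i^k < t_i^j − t'_i^j, then x'_i^j = 1. -/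
theorem stmt_1 (n m : ℕ)
    (f : Matrix (Fin n) (Fin m) ℝ → Matrix (Fin n) (Fin m) ℝ)
    (halloc : ∀ T i j, f T i j = 0 ∨ f T i j = 1)
    (hone : ∀ T j, ∑ i, f T i j = 1)
    (hwmon : ∀ (i : Fin n) (T T' : Matrix (Fin n) (Fin m) ℝ),
      (∀ i' ≠ i, T i' = T' i') →
      ∑ j, (T i j - T' i j) * (f T i j - f T' i j) ≤ 0)
    (i : Fin n) (T T' : Matrix (Fin n) (Fin m) ℝ)
    (hrows : ∀ i' ≠ i, T i' = T' i')
    (j k : Fin m) (hjk : j ≠ k)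
    (hxj : f T i j = 1) (hj : T' i j < T i j) (hk : T' i k < T i k)
    (hother : ∀ l, l ≠ j → l ≠ k → T i l = T' i l) :
    (f T' i j = 1 ∨ f T' i k = 1) ∧
      (T i k - T' i k < T i j - T' i j → f T' i j = 1) := by
  have hs := hwmon i T T' hrows
  rw [← Finset.sum_subset (Finset.subset_univ ({j, k} : Finset (Fin m)))
      (fun l _ hl => by
        have h1 : l ≠ j := fun h => hl (by simp [h])
        have h2 : l ≠ k := fun h => hl (by simp [h])
        rw [hother l h1 h2]; ring)] at hs
  rw [Finset.sum_pair hjk] at hs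
  rcases halloc T' i j with hj' | hj'
  · rcases halloc T i k with hk1 | hk1 <;> rcases halloc T' i k with hk2 | hk2
    · exfalso; rw [hxj, hj', hk1, hk2] at hs; nlinarith
    · exact ⟨Or.inr hk2, fun hlt => by
        exfalso; rw [hxj, hj', hk1, hk2] at hs; nlinarith⟩
    · exfalso; rw [hxj, hj', hk1, hk2] at hs; nlinarith
    · exfalso; rw [hxj, hj', hk1, hk2] at hs; nlinarith
  · exact ⟨Or.inl hj', fun _ => hj'⟩
end

section
/- Let f be a weakly monotone allocation function, i a machine, and T, T' two cost matrices differing only in row i, with x = f(T), x' = f(T'). Suppose j is a distinguished job with x_i^j = 1 and x'_i^j = 1 (a dummy job that machine i receives in both allocations). Let F1 = {r ≠ j : x_i^r = 1 and t_i^r > t'_i^r} and F2 = {k : x_i^k = 0 and t_i^k < t'_i^k}, and assume t_i^q = t'_i^q for every job q outside F1 ∪ F2 ∪ {j}. Then x'_i^r = 1 for all r in F1 and x'_i^k = 0 for all k in F2. -/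
theorem stmt_2 (n m : ℕ)
    (f : Matrix (Fin n) (Fin m) ℝ → Matrix (Fin n) (Fin m) ℝ)
    (halloc : ∀ T i j, f T i j = 0 ∨ f T i j = 1)
    (hone : ∀ T j, ∑ i, f T i j = 1)
    (hwmon : ∀ (i : Fin n) (T T' : Matrix (Fin n) (Fin m) ℝ),
      (∀ i' ≠ i, T i' = T' i') →
      ∑ j, (T i j - T' i j) * (f T i j - f T' i j) ≤ 0)
    (i : Fin n) (T T' : Matrix (Fin n) (Fin m) ℝ)
    (hrows : ∀ i' ≠ i, T i' = T' i')
    (j : Fin m) (hxj : f T i j = 1) (hxj' : f T' i j = 1)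
    (F1 F2 : Finset (Fin m))
    (hdisj : Disjoint F1 F2) (hjF1 : j ∉ F1) (hjF2 : j ∉ F2)
    (hF1 : ∀ r ∈ F1, r ≠ j ∧ f T i r = 1 ∧ T' i r < T i r)
    (hF2 : ∀ k ∈ F2, f T i k = 0 ∧ T i k < T' i k)
    (hF3 : ∀ q, q ∉ F1 → q ∉ F2 → q ≠ j → T i q = T' i q) :
    (∀ r ∈ F1, f T' i r = 1) ∧ (∀ k ∈ F2, f T' i k = 0) := by
  have hsum := hwmon i T T' hrows
  have hnonneg : ∀ q : Fin m, 0 ≤ (T i q - T' i q) * (f T i q - f T' i q) := by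
    intro q
    by_cases h1 : q ∈ F1
    · obtain ⟨_, hx, hlt⟩ := hF1 q h1
      rcases halloc T' i q with h' | h' <;> rw [hx, h'] <;> nlinarith
    · by_cases h2 : q ∈ F2
      · obtain ⟨hx, hlt⟩ := hF2 q h2
        rcases halloc T' i q with h' | h' <;> rw [hx, h'] <;> nlinarith
      · by_cases hj : q = j
        · subst hj; rw [hxj, hxj']; simp
        · rw [hF3 q h1 h2 hj]; simp
  have hzero : ∀ q ∈ Finset.univ, (T i q - T' i q) * (f T i q - f T' i q) = 0 := by
    rw [← Finset.sum_eq_zero_iff_of_nonneg (fun q _ => hnonneg q)]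
    exact le_antisymm hsum (Finset.sum_nonneg (fun q _ => hnonneg q))
  constructor
  · intro r hr
    obtain ⟨_, hx, hlt⟩ := hF1 r hr
    have h0 := hzero r (Finset.mem_univ r)
    rcases halloc T' i r with h' | h'
    · rw [hx, h'] at h0; nlinarith
    · exact h'
  · intro k hk
    obtain ⟨hx, hlt⟩ := hF2 k hk
    have h0 := hzero k (Finset.mem_univ k)
    rcases halloc T' i k with h' | h'
    · exact h'
    · rw [hx, h'] at h0; nlinarith
end

section
/- Let f be a weakly monotone allocation function, i a machine, and T, T' two cost matrices differing only in row i, with x = f(T), x' = f(T'). Suppose j1, j2 are two jobs with x_i^{j1} = x_i^{j2} = 1, t_i^{j1} > t'_i^{j1}, t_i^{j2} < t'_i^{j2}, and t_i^j = t'_i^j for all other jobs j. Then x'_i^{j2} = 1 implies x'_i^{j1} = 1. -/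
theorem stmt_3 (n m : ℕ)
    (f : Matrix (Fin n) (Fin m) ℝ → Matrix (Fin n) (Fin m) ℝ)
    (halloc : ∀ T i j, f T i j = 0 ∨ f T i j = 1)
    (hone : ∀ T j, ∑ i, f T i j = 1)
    (hwmon : ∀ (i : Fin n) (T T' : Matrix (Fin n) (Fin m) ℝ),
      (∀ i' ≠ i, T i' = T' i') →
      ∑ j, (T i j - T' i j) * (f T i j - f T' i j) ≤ 0)
    (i : Fin n) (T T' : Matrix (Fin n) (Fin m) ℝ)
    (hrows : ∀ i' ≠ i, T i' = T' i')
    (j1 j2 : Fin m) (hj12 : j1 ≠ j2)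
    (hx1 : f T i j1 = 1) (hx2 : f T i j2 = 1)
    (h1 : T' i j1 < T i j1) (h2 : T i j2 < T' i j2)
    (hother : ∀ j, j ≠ j1 → j ≠ j2 → T i j = T' i j) :
    f T' i j2 = 1 → f T' i j1 = 1 := by
  intro hx2'
  have key := hwmon i T T' hrows
  have hsum : ∑ j, (T i j - T' i j) * (f T i j - f T' i j)
      = (T i j1 - T' i j1) * (f T i j1 - f T' i j1) := by
    apply Finset.sum_eq_single
    · intro j _ hj
      by_cases h : j = j2
      · subst h; rw [hx2, hx2']; ring
      · rw [hother j hj h]; ring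
    · intro h; exact absurd (Finset.mem_univ j1) h
  rw [hsum, hx1] at key
  rcases halloc T' i j1 with h | h
  · rw [h] at key; nlinarith
  · exact h
end

section
/- For every real a with √2 < a < 2, the sequence x_r = (a+2)·((2/a)^r − 1) + ((1 − a^r)/(a^{2r}·(1−a)))·(2^r − 1) tends to +∞ as r → ∞. -/
/-- `s(0)` tends to infinity. -/
theorem stmt_6 (a : ℝ) (h1 : Real.sqrt 2 < a) (h2 : a < 2) :
    Filter.Tendsto
      (fun r : ℕ => (a + 2) * ((2 / a) ^ r - 1)
        + ((1 - a ^ r) / (a ^ (2 * r) * (1 - a))) * (2 ^ r - 1))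
      Filter.atTop Filter.atTop := by
  have hs : (1:ℝ) < Real.sqrt 2 := by
    nlinarith [Real.sq_sqrt (by norm_num : (2:ℝ) ≥ 0), Real.sqrt_nonneg 2]
  have ha1 : (1:ℝ) < a := lt_trans hs h1
  have ha0 : (0:ℝ) < a := lt_trans one_pos ha1
  have hlt : (1:ℝ) < 2 / a := (one_lt_div ha0).mpr h2
  have hfirst : Filter.Tendsto (fun r : ℕ => (a + 2) * ((2 / a) ^ r - 1))
      Filter.atTop Filter.atTop := by
    apply Filter.Tendsto.const_mul_atTop (by linarith : (0:ℝ) < a + 2)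
    exact (tendsto_pow_atTop_atTop_of_one_lt hlt).atTop_add tendsto_const_nhds
  apply Filter.tendsto_atTop_mono _ hfirst
  intro r
  have h2r : (0:ℝ) ≤ (2:ℝ) ^ r - 1 := by
    simp only [sub_nonneg]
    exact one_le_pow₀ (by norm_num)
  have hnum : (1:ℝ) - a ^ r ≤ 0 := by
    have := one_le_pow₀ (n := r) ha1.le
    linarith
  have hden : a ^ (2 * r) * (1 - a) ≤ 0 := by
    apply mul_nonpos_of_nonneg_of_nonpos (pow_nonneg ha0.le _)
    linarith
  have : 0 ≤ ((1 - a ^ r) / (a ^ (2 * r) * (1 - a))) * ((2:ℝ) ^ r - 1) :=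
    mul_nonneg (div_nonneg_of_nonpos hnum hden) h2r
  linarith
end
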